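/- Let E, F be vector lattices with F Dedekind complete, and S, T : E → F abstract Uryson operators. Then for every f ∈ E: (S ∨ T)(f) = sup{S(g₁) + T(g₂) : f = g₁ + g₂, g₁ ⊥ g₂} and (S ∧ T)(f) = inf{S(g₁) + T(g₂) : f = g₁ + g₂, g₁ ⊥ g₂}. -/

import Mathlib

open scoped BigOperators

section Defs
variable {E F : Type*}
variable [Lattice E] [AddCommGroup E] [CovariantClass E E (· + ·) (· ≤ ·)]
variable [Lattice F] [AddCommGroup F] [CovariantClass F F (· + ·) (· ≤ ·)]

/-- Disjointness in a vector lattice: `|x| ⊓ |y| = 0`. -/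
def EDisj (x y : E) : Prop := |x| ⊓ |y| = 0

/-- `y` is a fragment (component) of `x`: `y ⊥ (x - y)`. -/
def Fragment (y x : E) : Prop := EDisj y (x - y)

/-- Orthogonally additive operator. -/
def OrthAdditive (T : E → F) : Prop := ∀ x y : E, EDisj x y → T (x + y) = T x + T y

/-- Positive (in the orthogonally additive sense). -/
def PositiveOp (T : E → F) : Prop := ∀ x : E, 0 ≤ T x

/-- Order bounded operator. -/
def OrderBoundedOp (T : E → F) : Prop :=
  ∀ a b : E, ∃ c d : F, ∀ x : E, a ≤ x → x ≤ b → c ≤ T x ∧ T x ≤ d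

/-- Abstract Uryson operator: orthogonally additive and order bounded. -/
def UrysonOp (T : E → F) : Prop := OrthAdditive T ∧ OrderBoundedOp T

/-- Lateral ideal. -/
def LateralIdeal (D : Set E) : Prop :=
  (∀ x ∈ D, ∀ y : E, Fragment y x → y ∈ D) ∧
  (∀ x ∈ D, ∀ y ∈ D, EDisj x y → x + y ∈ D)

/-- Band (order) projection on `F`. -/
def IsBandProjection (ρ : F → F) : Prop :=
  (∀ x y : F, ρ (x + y) = ρ x + ρ y) ∧ (∀ x : F, ρ (ρ x) = ρ x) ∧
  (∀ x : F, 0 ≤ x → 0 ≤ ρ x ∧ ρ x ≤ x)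

/-- Partition of unity: mutually disjoint band projections with supremum the identity. -/
def BandPartitionOfUnity {ι : Type*} (ρ : ι → F → F) : Prop :=
  (∀ i, IsBandProjection (ρ i)) ∧
  (∀ i j, i ≠ j → ∀ x : F, ρ i (ρ j x) = 0) ∧
  (∀ x : F, 0 ≤ x → IsLUB {y : F | ∃ s : Finset ι, y = ∑ i ∈ s, ρ i x} x)

/-- Weak order unit. -/
def WeakOrderUnit (u : F) : Prop := 0 ≤ u ∧ ∀ v : F, |v| ⊓ u = 0 → v = 0

/-- Order narrow operator. -/
def OrderNarrow (T : E → F) : Prop :=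
  ∀ e : E, ∃ (ι : Type) (le : ι → ι → Prop) (f g : ι → E) (u : ι → F),
    Nonempty ι ∧ (∀ a, le a a) ∧ (∀ a b c, le a b → le b c → le a c) ∧
    (∀ a b, ∃ c, le a c ∧ le b c) ∧
    (∀ a, f a + g a = e ∧ EDisj (f a) (g a)) ∧
    (∀ a b, le a b → u b ≤ u a) ∧ IsGLB (Set.range u) 0 ∧
    (∀ a, |T (f a) - T (g a)| ≤ u a)

/-- Disjointness of orthogonally additive operators, via the pointwise infimum formula. -/
def OpDisjoint (S R : E → F) : Prop :=
  ∀ f : E, IsGLB {v : F | ∃ g₁ g₂ : E, g₁ + g₂ = f ∧ EDisj g₁ g₂ ∧ v = S g₁ + R g₂} 0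

/-- `S` is a fragment of `T` in `U(E,F)`: `S ⊥ (T - S)`. -/
def OpFragment (S T : E → F) : Prop := OpDisjoint S (fun e => T e - S e)

end Defs

/-- Atomless vector lattice: every nonzero element has a nontrivial fragment. -/
def AtomlessVL (E : Type*) [Lattice E] [AddCommGroup E]
    [CovariantClass E E (· + ·) (· ≤ ·)] : Prop :=
  ∀ e : E, e ≠ 0 → ∃ y : E, Fragment y e ∧ y ≠ 0 ∧ y ≠ e

/-- Principal projection property: the band generated by any element is a projection band. -/
def HasPPP (E : Type*) [Lattice E] [AddCommGroup E]
    [CovariantClass E E (· + ·) (· ≤ ·)] : Prop :=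
  ∀ e : E, ∃ ρ : E → E,
    (∀ x y : E, ρ (x + y) = ρ x + ρ y) ∧ (∀ x : E, 0 ≤ x → 0 ≤ ρ x ∧ ρ x ≤ x) ∧
    ρ e = e ∧ (∀ x : E, EDisj x e → ρ x = 0) ∧ (∀ x : E, EDisj (x - ρ x) e)

section PiX
variable {E F : Type*}
variable [Lattice E] [AddCommGroup E] [CovariantClass E E (· + ·) (· ≤ ·)]
variable [ConditionallyCompleteLattice F] [AddCommGroup F]
variable [CovariantClass F F (· + ·) (· ≤ ·)]

/-- `π^x T (e) = sup { T y : y ⊑ e, y ⊑ x }`. -/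
noncomputable def piX (T : E → F) (x : E) : E → F :=
  fun e => sSup {v : F | ∃ y : E, Fragment y e ∧ Fragment y x ∧ v = T y}

/-- `π^D T (e) = sup { T y : y ⊑ e, y ∈ D }` for a lateral ideal `D`. -/
noncomputable def piD (T : E → F) (D : Set E) : E → F :=
  fun e => sSup {v : F | ∃ y : E, Fragment y e ∧ y ∈ D ∧ v = T y}

end PiX

/-!
Let `P f` be the set of sums `S g₁ + T g₂` over disjoint decompositions `f = g₁ + g₂`, and
`R f := sup P f`. Taking `g₂ = 0` or `g₁ = 0` shows `S, T ≤ R`, and every orthogonally additive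
upper bound of `S` and `T` dominates `R`; so `R = S ∨ T` as soon as `R` is an abstract Uryson
operator. Order boundedness is inherited from `S` and `T`, since fragments of `f` lie in
`[-|f|, |f|]`. Orthogonal additivity follows from `P (x + y) = P x + P y` for `x ⊥ y`, which holds
because two disjoint decompositions `g + h = x + y` have a common refinement, obtained by the
Riesz decomposition of the positive and negative parts. The infimum formula is the supremum
formula in the order dual of `F`.
-/

lemma inf_eq_zero_of_le_of_le {α : Type*} [Lattice α] [Zero α] {a b c d : α} (hab : a ⊓ b = 0)
    (hc : 0 ≤ c) (hd : 0 ≤ d) (hca : c ≤ a) (hdb : d ≤ b) : c ⊓ d = 0 :=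
  le_antisymm ((inf_le_inf hca hdb).trans hab.le) (le_inf hc hd)

section LatticeOrderedGroup

variable {α : Type*} [Lattice α] [AddCommGroup α] {a b c u v x y g h : α}

lemma EDisj.symm (hxy : EDisj x y) : EDisj y x := by
  rwa [EDisj, inf_comm]

/-- For fragments `u`, `v` of a common element this is their meet in the Boolean algebra of
fragments. -/
def fragmentInf (u v : α) : α := u⁺ ⊓ v⁺ - u⁻ ⊓ v⁻

lemma fragmentInf_comm (u v : α) : fragmentInf u v = fragmentInf v u := by
  simp only [fragmentInf, inf_comm]

variable [AddLeftMono α]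

lemma add_eq_sup_of_inf_eq_zero (hab : a ⊓ b = 0) : a + b = a ⊔ b := by
  rw [← inf_add_sup a b, hab, zero_add]

lemma posPart_le_abs (a : α) : a⁺ ≤ |a| :=
  posPart_add_negPart a ▸ le_add_of_nonneg_right (negPart_nonneg a)

lemma negPart_le_abs (a : α) : a⁻ ≤ |a| :=
  posPart_add_negPart a ▸ le_add_of_nonneg_left (posPart_nonneg a)

lemma inf_add_le_inf_add_inf (ha : 0 ≤ a) (hb : 0 ≤ b) (hc : 0 ≤ c) :
    c ⊓ (a + b) ≤ c ⊓ a + c ⊓ b := by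
  -- `c ⊓ a + c ⊓ b = (c + c) ⊓ (a + c) ⊓ ((c + b) ⊓ (a + b))`, and each term is `≥ c ⊓ (a + b)`.
  rw [add_inf, inf_add, inf_add]
  exact le_inf (le_inf (inf_le_of_left_le (le_add_of_nonneg_right hc))
      (inf_le_of_left_le (le_add_of_nonneg_left ha)))
    (le_inf (inf_le_of_left_le (le_add_of_nonneg_right hb)) inf_le_right)

lemma inf_add_eq_zero (hab : a ⊓ b = 0) (hac : a ⊓ c = 0) : a ⊓ (b + c) = 0 :=
  le_antisymm
    ((inf_add_le_inf_add_inf (hab ▸ inf_le_right) (hac ▸ inf_le_right) (hab ▸ inf_le_left)).trans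
      (by rw [hab, hac, add_zero]))
    (le_inf (hab ▸ inf_le_left) (add_nonneg (hab ▸ inf_le_right) (hac ▸ inf_le_right)))

lemma add_inf_eq_zero (hac : a ⊓ c = 0) (hbc : b ⊓ c = 0) : (a + b) ⊓ c = 0 := by
  rw [inf_comm] at hac hbc ⊢
  exact inf_add_eq_zero hac hbc

lemma eq_inf_add_inf_of_le_add (hab : a ⊓ b = 0) (hc : 0 ≤ c) (hcab : c ≤ a + b) :
    c = c ⊓ a + c ⊓ b := by
  have hdisj : c ⊓ a ⊓ (c ⊓ b) = 0 :=
    inf_eq_zero_of_le_of_le hab (le_inf hc (hab ▸ inf_le_left)) (le_inf hc (hab ▸ inf_le_right))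
      inf_le_right inf_le_right
  refine le_antisymm ?_ ?_
  · calc c = c ⊓ (a + b) := (inf_eq_left.2 hcab).symm
      _ ≤ c ⊓ a + c ⊓ b :=
        inf_add_le_inf_add_inf (hab ▸ inf_le_left) (hab ▸ inf_le_right) hc
  · rw [add_eq_sup_of_inf_eq_zero hdisj]
    exact sup_le inf_le_left inf_le_left

lemma posPart_sub_of_inf_eq_zero (huv : u ⊓ v = 0) : (u - v)⁺ = u := by
  rw [posPart_def, ← sub_self v, ← sup_sub, ← add_eq_sup_of_inf_eq_zero huv, add_sub_cancel_right]

lemma negPart_sub_of_inf_eq_zero (huv : u ⊓ v = 0) : (u - v)⁻ = v := by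
  rw [← posPart_neg, neg_sub]
  exact posPart_sub_of_inf_eq_zero (inf_comm u v ▸ huv)

lemma edisj_zero_right (x : α) : EDisj x 0 := by
  rw [EDisj, abs_zero]
  exact inf_eq_right.2 (abs_nonneg x)

lemma EDisj.mono (hxy : EDisj x y) (hu : |u| ≤ |x|) (hv : |v| ≤ |y|) : EDisj u v :=
  inf_eq_zero_of_le_of_le hxy (abs_nonneg u) (abs_nonneg v) hu hv

lemma EDisj.posPart_inf_negPart (hxy : EDisj x y) : x⁺ ⊓ y⁻ = 0 :=
  inf_eq_zero_of_le_of_le hxy (posPart_nonneg x) (negPart_nonneg y) (posPart_le_abs x)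
    (negPart_le_abs y)

lemma EDisj.posPart_add_and_negPart_add (hxy : EDisj x y) :
    (x + y)⁺ = x⁺ + y⁺ ∧ (x + y)⁻ = x⁻ + y⁻ := by
  have hdisj : (x⁺ + y⁺) ⊓ (x⁻ + y⁻) = 0 :=
    add_inf_eq_zero (inf_add_eq_zero (posPart_inf_negPart_eq_zero x) hxy.posPart_inf_negPart)
      (inf_add_eq_zero hxy.symm.posPart_inf_negPart (posPart_inf_negPart_eq_zero y))
  have hsum : x + y = (x⁺ + y⁺) - (x⁻ + y⁻) := by
    conv_lhs => rw [← posPart_sub_negPart x, ← posPart_sub_negPart y]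
    abel
  rw [hsum]
  exact ⟨posPart_sub_of_inf_eq_zero hdisj, negPart_sub_of_inf_eq_zero hdisj⟩

lemma EDisj.abs_add (hxy : EDisj x y) : |x + y| = |x| + |y| := by
  obtain ⟨hpos, hneg⟩ := hxy.posPart_add_and_negPart_add
  rw [← posPart_add_negPart, hpos, hneg, ← posPart_add_negPart x, ← posPart_add_negPart y]
  abel

lemma EDisj.abs_left_le (hxy : EDisj x y) : |x| ≤ |x + y| :=
  hxy.abs_add ▸ le_add_of_nonneg_right (abs_nonneg y)

lemma EDisj.abs_right_le (hxy : EDisj x y) : |y| ≤ |x + y| :=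
  hxy.abs_add ▸ le_add_of_nonneg_left (abs_nonneg x)

lemma EDisj.add_left (hac : EDisj a c) (hbc : EDisj b c) : EDisj (a + b) c :=
  inf_eq_zero_of_le_of_le (add_inf_eq_zero hac hbc) (abs_nonneg _) (abs_nonneg c)
    (abs_add_le a b) le_rfl

lemma EDisj.add_right (hab : EDisj a b) (hac : EDisj a c) : EDisj a (b + c) :=
  (hab.symm.add_left hac.symm).symm

lemma abs_fragmentInf_le_left (u v : α) : |fragmentInf u v| ≤ |u| := by
  have hdisj : u⁺ ⊓ v⁺ ⊓ (u⁻ ⊓ v⁻) = 0 :=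
    inf_eq_zero_of_le_of_le (posPart_inf_negPart_eq_zero u)
      (le_inf (posPart_nonneg u) (posPart_nonneg v)) (le_inf (negPart_nonneg u) (negPart_nonneg v))
      inf_le_left inf_le_left
  rw [fragmentInf, ← posPart_add_negPart, posPart_sub_of_inf_eq_zero hdisj,
    negPart_sub_of_inf_eq_zero hdisj, add_eq_sup_of_inf_eq_zero hdisj, ← posPart_add_negPart u,
    add_eq_sup_of_inf_eq_zero (posPart_inf_negPart_eq_zero u)]
  exact sup_le_sup inf_le_left inf_le_left

lemma abs_fragmentInf_le_right (u v : α) : |fragmentInf u v| ≤ |v| :=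
  fragmentInf_comm v u ▸ abs_fragmentInf_le_left v u

lemma fragmentInf_add_fragmentInf (hxy : EDisj x y) (hgh : EDisj g h) (hsum : g + h = x + y) :
    fragmentInf g x + fragmentInf g y = g := by
  obtain ⟨hpos, hneg⟩ := hgh.posPart_add_and_negPart_add
  obtain ⟨hpos', hneg'⟩ := hxy.posPart_add_and_negPart_add
  have hp : g⁺ ≤ x⁺ + y⁺ := calc
    g⁺ ≤ g⁺ + h⁺ := le_add_of_nonneg_right (posPart_nonneg h)
    _ = x⁺ + y⁺ := by rw [← hpos, hsum, hpos']
  have hn : g⁻ ≤ x⁻ + y⁻ := calc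
    g⁻ ≤ g⁻ + h⁻ := le_add_of_nonneg_right (negPart_nonneg h)
    _ = x⁻ + y⁻ := by rw [← hneg, hsum, hneg']
  rw [fragmentInf, fragmentInf, sub_add_sub_comm,
    ← eq_inf_add_inf_of_le_add (inf_eq_zero_of_le_of_le hxy (posPart_nonneg x) (posPart_nonneg y)
      (posPart_le_abs x) (posPart_le_abs y)) (posPart_nonneg g) hp,
    ← eq_inf_add_inf_of_le_add (inf_eq_zero_of_le_of_le hxy (negPart_nonneg x) (negPart_nonneg y)
      (negPart_le_abs x) (negPart_le_abs y)) (negPart_nonneg g) hn,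
    posPart_sub_negPart]

lemma EDisj.exists_refinement (hxy : EDisj x y) (hgh : EDisj g h) (hsum : g + h = x + y) :
    ∃ a₁ a₂ b₁ b₂ : α, a₁ + a₂ = g ∧ b₁ + b₂ = h ∧ a₁ + b₁ = x ∧ a₂ + b₂ = y ∧
      EDisj a₁ a₂ ∧ EDisj b₁ b₂ ∧ EDisj a₁ b₁ ∧ EDisj a₂ b₂ := by
  refine ⟨fragmentInf g x, fragmentInf g y, fragmentInf h x, fragmentInf h y,
    fragmentInf_add_fragmentInf hxy hgh hsum,
    fragmentInf_add_fragmentInf hxy hgh.symm (add_comm g h ▸ hsum), ?_, ?_,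
    hxy.mono (abs_fragmentInf_le_right g x) (abs_fragmentInf_le_right g y),
    hxy.mono (abs_fragmentInf_le_right h x) (abs_fragmentInf_le_right h y),
    hgh.mono (abs_fragmentInf_le_left g x) (abs_fragmentInf_le_left h x),
    hgh.mono (abs_fragmentInf_le_left g y) (abs_fragmentInf_le_left h y)⟩
  · rw [fragmentInf_comm g, fragmentInf_comm h]
    exact fragmentInf_add_fragmentInf hgh hxy hsum.symm
  · rw [fragmentInf_comm g, fragmentInf_comm h]
    exact fragmentInf_add_fragmentInf hgh hxy.symm (hsum ▸ add_comm y x)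

end LatticeOrderedGroup

section Operators

variable {E F : Type*} [Lattice E] [AddCommGroup E]

def splitSums [Add F] (S T : E → F) (f : E) : Set F :=
  {v | ∃ g₁ g₂ : E, g₁ + g₂ = f ∧ EDisj g₁ g₂ ∧ v = S g₁ + T g₂}

variable [AddCommGroup F] {S T U : E → F}

lemma mem_upperBounds_splitSums [Lattice F] [AddLeftMono F] (hU : OrthAdditive U)
    (hSU : ∀ x, S x ≤ U x) (hTU : ∀ x, T x ≤ U x) (f : E) :
    U f ∈ upperBounds (splitSums S T f) := by
  rintro _ ⟨g₁, g₂, rfl, hg, rfl⟩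
  rw [hU _ _ hg]
  exact add_le_add (hSU g₁) (hTU g₂)

variable [AddLeftMono E]

lemma OrthAdditive.map_zero (hT : OrthAdditive T) : T 0 = 0 := by
  simpa using hT 0 0 (edisj_zero_right 0)

lemma left_mem_splitSums (hT : OrthAdditive T) (f : E) : S f ∈ splitSums S T f :=
  ⟨f, 0, add_zero f, edisj_zero_right f, by rw [hT.map_zero, add_zero]⟩

lemma right_mem_splitSums (hS : OrthAdditive S) (f : E) : T f ∈ splitSums S T f :=
  ⟨0, f, zero_add f, (edisj_zero_right f).symm, by rw [hS.map_zero, zero_add]⟩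

open Pointwise in
lemma splitSums_add (hS : OrthAdditive S) (hT : OrthAdditive T) {x y : E} (hxy : EDisj x y) :
    splitSums S T (x + y) = splitSums S T x + splitSums S T y := by
  ext v
  rw [Set.mem_add]
  constructor
  · rintro ⟨g, h, hsum, hgh, rfl⟩
    obtain ⟨a₁, a₂, b₁, b₂, rfl, rfl, hx, hy, ha, hb, hab₁, hab₂⟩ :=
      hxy.exists_refinement hgh hsum
    refine ⟨S a₁ + T b₁, ⟨a₁, b₁, hx, hab₁, rfl⟩, S a₂ + T b₂, ⟨a₂, b₂, hy, hab₂, rfl⟩, ?_⟩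
    rw [hS _ _ ha, hT _ _ hb]
    abel
  · rintro ⟨_, ⟨a₁, a₂, rfl, ha, rfl⟩, _, ⟨b₁, b₂, rfl, hb, rfl⟩, rfl⟩
    have h₁₁ : EDisj a₁ b₁ := hxy.mono ha.abs_left_le hb.abs_left_le
    have h₁₂ : EDisj a₁ b₂ := hxy.mono ha.abs_left_le hb.abs_right_le
    have h₂₁ : EDisj a₂ b₁ := hxy.mono ha.abs_right_le hb.abs_left_le
    have h₂₂ : EDisj a₂ b₂ := hxy.mono ha.abs_right_le hb.abs_right_le
    refine ⟨a₁ + b₁, a₂ + b₂, by abel, (ha.add_right h₁₂).add_left (h₂₁.symm.add_right hb), ?_⟩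
    rw [hS _ _ h₁₁, hT _ _ h₂₂]
    abel

variable [Lattice F]

lemma UrysonOp.exists_bounds_of_abs_le (hT : UrysonOp T) (m : E) :
    ∃ c d : F, ∀ x, |x| ≤ m → c ≤ T x ∧ T x ≤ d := by
  obtain ⟨c, d, hcd⟩ := hT.2 (-m) m
  exact ⟨c, d, fun x hx => hcd x (neg_le.1 (abs_le'.1 hx).2) (abs_le'.1 hx).1⟩

lemma exists_mem_upperBounds_splitSums [AddLeftMono F] (hS : UrysonOp S) (hT : UrysonOp T)
    (m : E) : ∃ d : F, ∀ x, |x| ≤ m → d ∈ upperBounds (splitSums S T x) := by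
  obtain ⟨_, dS, hdS⟩ := hS.exists_bounds_of_abs_le m
  obtain ⟨_, dT, hdT⟩ := hT.exists_bounds_of_abs_le m
  refine ⟨dS + dT, fun x hx => ?_⟩
  rintro _ ⟨g₁, g₂, rfl, hg, rfl⟩
  exact add_le_add (hdS g₁ (hg.abs_left_le.trans hx)).2 (hdT g₂ (hg.abs_right_le.trans hx)).2

end Operators

section Dual

variable {E F : Type*} [Lattice E] [AddCommGroup E] [Lattice F] [AddCommGroup F] {S T : E → F}

lemma UrysonOp.dual (hT : UrysonOp T) : UrysonOp (F := Fᵒᵈ) T := by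
  refine ⟨hT.1, fun a b => ?_⟩
  obtain ⟨c, d, hcd⟩ := hT.2 a b
  exact ⟨d, c, fun x hax hxb => (hcd x hax hxb).symm⟩

def IsUrysonSup (S T V : E → F) : Prop :=
  UrysonOp V ∧ (∀ x : E, S x ≤ V x) ∧ (∀ x : E, T x ≤ V x) ∧
    ∀ U : E → F, UrysonOp U → (∀ x : E, S x ≤ U x) → (∀ x : E, T x ≤ U x) → ∀ x : E, V x ≤ U x

def IsUrysonInf (S T W : E → F) : Prop :=
  UrysonOp W ∧ (∀ x : E, W x ≤ S x) ∧ (∀ x : E, W x ≤ T x) ∧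
    ∀ U : E → F, UrysonOp U → (∀ x : E, U x ≤ S x) → (∀ x : E, U x ≤ T x) → ∀ x : E, U x ≤ W x

lemma IsUrysonInf.dual {W : E → F} (hW : IsUrysonInf S T W) : IsUrysonSup (F := Fᵒᵈ) S T W :=
  ⟨hW.1.dual, hW.2.1, hW.2.2.1, fun U hU => hW.2.2.2 U hU.dual⟩

end Dual

section Envelope

variable {E F : Type*} [Lattice E] [AddCommGroup E] [AddLeftMono E]
  [ConditionallyCompleteLattice F] [AddCommGroup F] [AddLeftMono F] {S T : E → F}

lemma isLUB_sSup_splitSums (hS : UrysonOp S) (hT : UrysonOp T) (f : E) :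
    IsLUB (splitSums S T f) (sSup (splitSums S T f)) := by
  obtain ⟨d, hd⟩ := exists_mem_upperBounds_splitSums hS hT |f|
  exact isLUB_csSup ⟨_, left_mem_splitSums hT.1 f⟩ ⟨d, hd f le_rfl⟩

lemma urysonOp_sSup_splitSums (hS : UrysonOp S) (hT : UrysonOp T) :
    UrysonOp fun f => sSup (splitSums S T f) := by
  have hlub := isLUB_sSup_splitSums hS hT
  refine ⟨fun x y hxy => ?_, fun a b => ?_⟩
  · have hsum := (hlub x).add (hlub y)
    rw [← splitSums_add hS.1 hT.1 hxy] at hsum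
    exact (hlub (x + y)).unique hsum
  · obtain ⟨c, _, hc⟩ := hS.exists_bounds_of_abs_le (|a| ⊔ |b|)
    obtain ⟨d, hd⟩ := exists_mem_upperBounds_splitSums hS hT (|a| ⊔ |b|)
    refine ⟨c, d, fun x hax hxb => ?_⟩
    have hx : |x| ≤ |a| ⊔ |b| := abs_le'.2
      ⟨hxb.trans ((le_abs_self b).trans le_sup_right),
        (neg_le_neg_iff.2 hax).trans ((neg_le_abs a).trans le_sup_left)⟩
    exact ⟨(hc x hx).1.trans ((hlub x).1 (left_mem_splitSums hT.1 x)),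
      (hlub x).2 (hd x hx)⟩

theorem IsUrysonSup.isLUB_splitSums {V : E → F} (hS : UrysonOp S) (hT : UrysonOp T)
    (hV : IsUrysonSup S T V) (f : E) : IsLUB (splitSums S T f) (V f) := by
  obtain ⟨hVU, hSV, hTV, hV_min⟩ := hV
  have hlub := isLUB_sSup_splitSums hS hT
  have hV_eq : V f = sSup (splitSums S T f) :=
    le_antisymm
      (hV_min _ (urysonOp_sSup_splitSums hS hT) (fun x => (hlub x).1 (left_mem_splitSums hT.1 x))
        (fun x => (hlub x).1 (right_mem_splitSums hS.1 x)) f)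
      ((hlub f).2 (mem_upperBounds_splitSums hVU.1 hSV hTV f))
  exact hV_eq ▸ hlub f

theorem IsUrysonInf.isGLB_splitSums {W : E → F} (hS : UrysonOp S) (hT : UrysonOp T)
    (hW : IsUrysonInf S T W) (f : E) : IsGLB (splitSums S T f) (W f) :=
  hW.dual.isLUB_splitSums hS.dual hT.dual f

end Envelope

theorem uryson_sup_inf_formula_general {E F : Type*} [Lattice E] [AddCommGroup E] [CovariantClass E E (· + ·) (· ≤ ·)] [ConditionallyCompleteLattice F] [AddCommGroup F] [CovariantClass F F (· + ·) (· ≤ ·)]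
    (S T V W : E → F) (hS : UrysonOp S) (hT : UrysonOp T)
    (hV : UrysonOp V ∧ (∀ x : E, S x ≤ V x) ∧ (∀ x : E, T x ≤ V x) ∧
      ∀ U : E → F, UrysonOp U → (∀ x : E, S x ≤ U x) → (∀ x : E, T x ≤ U x) →
        ∀ x : E, V x ≤ U x)
    (hW : UrysonOp W ∧ (∀ x : E, W x ≤ S x) ∧ (∀ x : E, W x ≤ T x) ∧
      ∀ U : E → F, UrysonOp U → (∀ x : E, U x ≤ S x) → (∀ x : E, U x ≤ T x) →
        ∀ x : E, U x ≤ W x) :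
    ∀ f : E,
      IsLUB {v : F | ∃ g₁ g₂ : E, g₁ + g₂ = f ∧ EDisj g₁ g₂ ∧ v = S g₁ + T g₂} (V f) ∧
      IsGLB {v : F | ∃ g₁ g₂ : E, g₁ + g₂ = f ∧ EDisj g₁ g₂ ∧ v = S g₁ + T g₂} (W f) :=
  fun f => ⟨IsUrysonSup.isLUB_splitSums hS hT hV f, IsUrysonInf.isGLB_splitSums hS hT hW f⟩

theorem uryson_sup_inf_formula {E F : Type*} [Lattice E] [AddCommGroup E] [CovariantClass E E (· + ·) (· ≤ ·)] [Module ℝ E] [ConditionallyCompleteLattice F] [AddCommGroup F] [CovariantClass F F (· + ·) (· ≤ ·)] [Module ℝ F]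
    (S T V W : E → F) (hS : UrysonOp S) (hT : UrysonOp T)
    (hV : UrysonOp V ∧ (∀ x : E, S x ≤ V x) ∧ (∀ x : E, T x ≤ V x) ∧
      ∀ U : E → F, UrysonOp U → (∀ x : E, S x ≤ U x) → (∀ x : E, T x ≤ U x) →
        ∀ x : E, V x ≤ U x)
    (hW : UrysonOp W ∧ (∀ x : E, W x ≤ S x) ∧ (∀ x : E, W x ≤ T x) ∧
      ∀ U : E → F, UrysonOp U → (∀ x : E, U x ≤ S x) → (∀ x : E, U x ≤ T x) →
        ∀ x : E, U x ≤ W x) :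
    ∀ f : E,
      IsLUB {v : F | ∃ g₁ g₂ : E, g₁ + g₂ = f ∧ EDisj g₁ g₂ ∧ v = S g₁ + T g₂} (V f) ∧
      IsGLB {v : F | ∃ g₁ g₂ : E, g₁ + g₂ = f ∧ EDisj g₁ g₂ ∧ v = S g₁ + T g₂} (W f) :=
  uryson_sup_inf_formula_general S T V W hS hT hV hW
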